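/- arXiv:2105.11970 — 3 statements merged into one kernel-verified Lean document; each statement's English description precedes it below -/
import Mathlib

section
/- Let ℓ = ℓ(N) be a sequence of positive integers with N/ℓ(N) → 0 as N → ∞. Then P_{ℓ(N)}(cos(π/(2N))) → 0 as N → ∞, and consequently 2N · (1 − P_{ℓ(N)}(cos(π/(2N)))) / (2N) → 1, i.e. 1 − P_{ℓ(N)}(cos(π/(2N))) → 1. -/
open Real Filter

/-- Legendre polynomial via Rodrigues' formula. -/
noncomputable def legendre (n : ℕ) (t : ℝ) : ℝ :=
  (1 / (2 ^ n * n.factorial)) * iteratedDeriv n (fun x : ℝ => (x ^ 2 - 1) ^ n) t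

namespace LegendreAux

open Polynomial

noncomputable def W (n : ℕ) : ℝ[X] := (X ^ 2 - 1) ^ n
noncomputable def R (n : ℕ) : ℝ[X] := derivative^[n] (W n)

lemma iteratedDeriv_eval (n : ℕ) (p : ℝ[X]) (t : ℝ) :
    iteratedDeriv n (fun x => p.eval x) t = (derivative^[n] p).eval t := by
  induction n generalizing p with
  | zero => simp
  | succ n ih =>
    rw [iteratedDeriv_succ']
    have : (deriv fun x => p.eval x) = fun x => p.derivative.eval x := by
      funext x; exact Polynomial.deriv p
    rw [this, ih, Function.iterate_succ_apply]

lemma legendre_eq (n : ℕ) (t : ℝ) :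
    legendre n t = (1 / (2 ^ n * n.factorial)) * (R n).eval t := by
  unfold legendre R W
  congr 1
  have : (fun x : ℝ => (x ^ 2 - 1) ^ n) = fun x => ((X ^ 2 - 1 : ℝ[X]) ^ n).eval x := by
    funext x; simp
  rw [this, iteratedDeriv_eval]

lemma C2 : (C 2 : ℝ[X]) = 2 := map_ofNat C 2

lemma LX (m : ℕ) (g : ℝ[X]) :
    derivative^[m] (X * g) = X * derivative^[m] g + (m : ℝ[X]) * derivative^[m-1] g := by
  induction m generalizing g with
  | zero => simp
  | succ m ih =>
    rcases Nat.eq_zero_or_pos m with hm | hm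
    · subst hm; simp [derivative_mul]; ring
    · rw [Function.iterate_succ_apply', ih, derivative_add, derivative_mul, derivative_mul,
        derivative_X, derivative_natCast]
      have h1 : (m - 1).succ = m := Nat.succ_pred_eq_of_pos hm
      rw [← Function.iterate_succ_apply' derivative m,
        ← Function.iterate_succ_apply' derivative (m-1), h1]
      simp only [Nat.succ_eq_add_one, Nat.add_sub_cancel]
      push_cast
      ring

lemma LQ (m : ℕ) (g : ℝ[X]) :
    derivative^[m] ((X^2 - 1) * g) = (X^2 - 1) * derivative^[m] g
      + (2*m : ℝ[X]) * (X * derivative^[m-1] g)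
      + (m*(m-1) : ℝ[X]) * derivative^[m-2] g := by
  induction m generalizing g with
  | zero => simp
  | succ m ih =>
    rcases Nat.eq_zero_or_pos m with hm | hm
    · subst hm; simp [derivative_mul, C2]; ring
    rcases Nat.lt_or_ge m 2 with hm2 | hm2
    · interval_cases m
      have h2 : (1:ℕ)+1 = 1+1 := rfl
      simp only [Function.iterate_succ_apply', Function.iterate_one, Function.iterate_zero, id_eq]
      norm_num [derivative_mul, C2]
      ring
    · rw [Function.iterate_succ_apply', ih, derivative_add, derivative_add]
      simp only [derivative_mul, derivative_sub, derivative_one, derivative_X_pow,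
        derivative_X, derivative_natCast, derivative_ofNat]
      have h1 : (m - 1).succ = m := Nat.succ_pred_eq_of_pos hm
      have h2 : (m - 2).succ = m - 1 := by omega
      rw [← Function.iterate_succ_apply' derivative m,
        ← Function.iterate_succ_apply' derivative (m-1),
        ← Function.iterate_succ_apply' derivative (m-2), h1, h2]
      have e3 : ((m - 1 : ℕ) : ℝ[X]) = (m : ℝ[X]) - 1 := by
        push_cast [Nat.cast_sub hm]; ring
      simp only [Nat.succ_eq_add_one, Nat.add_sub_cancel, e3, C2]
      have e4 : (m + 1 - 2) = m - 1 := by omega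
      rw [e4]
      simp only [C2, Polynomial.C_eq_natCast]
      push_cast
      ring

lemma fact1 (n : ℕ) (hn : 1 ≤ n) :
    (X^2 - 1) * derivative (W n) = ((2*n : ℕ) : ℝ[X]) * (X * W n) := by
  unfold W
  have h' : n - 1 + 1 = n := by omega
  rw [derivative_pow, derivative_sub, derivative_X_pow, derivative_one, sub_zero]
  have h : (X^2 - 1 : ℝ[X]) * ((X^2-1)^(n-1)) = (X^2-1)^n := by
    conv_rhs => rw [← h']
    rw [pow_succ]; ring
  simp only [Polynomial.C_eq_natCast]
  push_cast
  linear_combination (2 * (n:ℝ[X]) * X) * h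

lemma ode (n : ℕ) :
    ((X:ℝ[X])^2 - 1) * derivative (derivative (R n)) + 2 * X * derivative (R n)
      = ((n*(n+1) : ℕ) : ℝ[X]) * R n := by
  rcases Nat.eq_zero_or_pos n with hn | hn
  · subst hn; simp [R, W]
  have h' : n - 1 + 1 = n := by omega
  have h := congrArg (derivative^[n+1]) (fact1 n hn)
  rw [LQ (n+1) (derivative (W n)), iterate_derivative_natCast_mul, LX (n+1) (W n)] at h
  have e1 : derivative^[n+1] (derivative (W n)) = derivative (derivative (R n)) := by
    rw [← Function.iterate_succ_apply derivative (n+1) (W n)]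
    rw [Function.iterate_succ_apply' derivative (n+1), Function.iterate_succ_apply' derivative n]
    rfl
  have e2 : derivative^[n] (derivative (W n)) = derivative (R n) := by
    rw [← Function.iterate_succ_apply derivative n (W n),
      Function.iterate_succ_apply' derivative n]
    rfl
  have e3 : derivative^[n-1] (derivative (W n)) = R n := by
    rw [← Function.iterate_succ_apply derivative (n-1) (W n)]
    simp only [Nat.succ_eq_add_one, h']
    rfl
  have e4 : derivative^[n+1] (W n) = derivative (R n) := by
    rw [Function.iterate_succ_apply' derivative n]
    rfl
  have e5 : (n+1) - 1 = n := by omega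
  have e6 : (n+1) - 2 = n - 1 := by omega
  rw [e5, e6, e1, e2, e3, e4] at h
  have hRn : derivative^[n] (W n) = R n := rfl
  rw [hRn] at h
  push_cast at h ⊢
  linear_combination h

lemma W_eq (n : ℕ) : W n
    = ∑ k ∈ Finset.range (n+1), C ((-1:ℝ)^(n-k) * (n.choose k)) * X^(2*k) := by
  unfold W
  rw [sub_eq_add_neg, add_pow]
  refine Finset.sum_congr rfl fun k hk => ?_
  have h1 : (-1:ℝ[X]) = C (-1) := by simp
  rw [← pow_mul, h1, ← C_pow, ← C_eq_natCast, C_mul]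
  ring

lemma coeffW (n m : ℕ) : (W n).coeff m
    = ∑ k ∈ Finset.range (n+1), if m = 2*k then ((-1:ℝ)^(n-k) * (n.choose k)) else 0 := by
  rw [W_eq, finset_sum_coeff]
  refine Finset.sum_congr rfl fun k hk => ?_
  rw [coeff_C_mul, coeff_X_pow]
  simp [mul_ite]

lemma coeffW_odd (n m : ℕ) (h : m % 2 = 1) : (W n).coeff m = 0 := by
  rw [coeffW]
  refine Finset.sum_eq_zero fun k hk => ?_
  have : m ≠ 2*k := by omega
  simp [this]

lemma coeffW_even (n j : ℕ) (hj : j ≤ n) : (W n).coeff (2*j) = (-1:ℝ)^(n-j) * (n.choose j) := by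
  rw [coeffW]
  rw [Finset.sum_eq_single j]
  · simp
  · intro k hk hkj
    have : 2*j ≠ 2*k := by omega
    simp [this]
  · intro h
    exact absurd (Finset.mem_range.mpr (by omega)) h

noncomputable def Pd (n : ℕ) (t : ℝ) : ℝ :=
  (1 / (2 ^ n * n.factorial)) * (derivative (R n)).eval t

lemma Reval0 (n : ℕ) : (R n).eval 0 = (n.factorial : ℝ) * (W n).coeff n := by
  rw [← coeff_zero_eq_eval_zero]
  unfold R
  rw [coeff_iterate_derivative, zero_add, Nat.descFactorial_self, nsmul_eq_mul]

lemma DReval0 (n : ℕ) : (derivative (R n)).eval 0 = ((n+1).factorial : ℝ) * (W n).coeff (n+1) := by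
  rw [← coeff_zero_eq_eval_zero]
  unfold R
  rw [← Function.iterate_succ_apply' derivative n (W n),
    coeff_iterate_derivative, zero_add, Nat.descFactorial_self, nsmul_eq_mul]

lemma legendre_zero (n : ℕ) : legendre n 0 = (W n).coeff n / 2^n := by
  rw [legendre_eq, Reval0]
  have h : (n.factorial : ℝ) ≠ 0 := Nat.cast_ne_zero.mpr n.factorial_ne_zero
  field_simp

lemma Pd_zero (n : ℕ) : Pd n 0 = ((n:ℝ)+1) * (W n).coeff (n+1) / 2^n := by
  unfold Pd
  rw [DReval0]
  have h : (n.factorial : ℝ) ≠ 0 := Nat.cast_ne_zero.mpr n.factorial_ne_zero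
  rw [Nat.factorial_succ]
  push_cast
  field_simp

noncomputable def cb (j : ℕ) : ℝ := (Nat.centralBinom j : ℝ) / 4^j

lemma cb_succ (j : ℕ) : cb (j+1) = cb j * (2*j+1) / (2*j+2) := by
  have h := congrArg (Nat.cast : ℕ → ℝ) (Nat.succ_mul_centralBinom_succ j)
  push_cast at h
  unfold cb
  rw [pow_succ]
  have h4 : (4:ℝ)^j ≠ 0 := by positivity
  have hj : ((j:ℝ)+1) ≠ 0 := by positivity
  field_simp
  linear_combination 2 * h

lemma cb_sq (j : ℕ) : (cb j)^2 ≤ 1/(2*(j:ℝ)+1) := by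
  induction j with
  | zero => simp [cb, Nat.centralBinom]
  | succ j ih =>
    rw [cb_succ]
    have h1 : (0:ℝ) < 2*(j:ℝ)+1 := by positivity
    have h2 : (0:ℝ) < 2*(j:ℝ)+2 := by positivity
    have h3 : (0:ℝ) < 2*(j:ℝ)+3 := by positivity
    have key : (cb j * (2*j+1) / (2*j+2))^2 ≤ (2*(j:ℝ)+1)/(2*(j:ℝ)+2)^2 := by
      rw [div_pow, mul_pow]
      rw [div_le_div_iff₀ (by positivity) (by positivity)]
      calc cb j ^2 * (2*(j:ℝ)+1)^2 * (2*(j:ℝ)+2)^2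
          ≤ (1/(2*(j:ℝ)+1) * (2*(j:ℝ)+1)^2) * (2*(j:ℝ)+2)^2 :=
            mul_le_mul_of_nonneg_right (mul_le_mul_of_nonneg_right ih (sq_nonneg _)) (sq_nonneg _)
        _ = (2*(j:ℝ)+1)*(2*(j:ℝ)+2)^2 := by field_simp
    refine key.trans ?_
    rw [div_le_div_iff₀ (by positivity) (by positivity)]
    push_cast
    nlinarith

lemma choose_odd_eq (m : ℕ) : 2 * Nat.choose (2*m+1) (m+1) = Nat.centralBinom (m+1) := by
  have hsymm : Nat.choose (2*m+1) m = Nat.choose (2*m+1) (m+1) := by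
    have := Nat.choose_symm (show m ≤ 2*m+1 by omega)
    have he : 2*m+1 - m = m+1 := by omega
    rw [he] at this
    omega
  have hpascal : Nat.choose (2*m+2) (m+1) = Nat.choose (2*m+1) m + Nat.choose (2*m+1) (m+1) :=
    Nat.choose_succ_succ (2*m+1) m ▸ rfl
  unfold Nat.centralBinom
  have he2 : 2*(m+1) = 2*m+2 := by omega
  rw [he2]
  omega

lemma sq_neg_one_pow_mul (k : ℕ) (a : ℝ) : ((-1:ℝ)^k * a)^2 = a^2 := by
  rw [mul_pow, ← pow_mul, mul_comm k 2, pow_mul]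
  norm_num

lemma two_pow_sq (k : ℕ) : ((2:ℝ)^k)^2 = 4^k := by
  rw [← pow_mul, mul_comm, pow_mul]
  norm_num

lemma value_bound (n : ℕ) (hn : 1 ≤ n) :
    (legendre n 0)^2 + (Pd n 0)^2 / (((n:ℝ)+1/2)^2 + 1/4) ≤ 3 / n := by
  have hq : (0:ℝ) < ((n:ℝ)+1/2)^2 + 1/4 := by positivity
  have hnR : (0:ℝ) < n := by exact_mod_cast hn
  rcases Nat.even_or_odd n with ⟨m, hm⟩ | ⟨m, hm⟩
  · -- n = 2m even
    have hm' : n = 2*m := by omega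
    have hmpos : 1 ≤ m := by omega
    have h1 : (legendre n 0)^2 = (cb m)^2 := by
      rw [legendre_zero, hm', coeffW_even (2*m) m (by omega)]
      unfold cb Nat.centralBinom
      rw [div_pow, div_pow, sq_neg_one_pow_mul, two_pow_sq, ← pow_mul, mul_comm m 2]
    have h2 : Pd n 0 = 0 := by
      rw [Pd_zero, coeffW_odd n (n+1) (by omega)]
      simp
    rw [h1, h2]
    have h3 := cb_sq m
    have hz : (0:ℝ)^2 / (((n:ℝ)+1/2)^2 + 1/4) = 0 := by simp
    rw [hz, add_zero]
    have hcast : (2*(m:ℝ)+1) = (n:ℝ)+1 := by rw [hm']; push_cast; ring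
    rw [hcast] at h3
    refine h3.trans ?_
    rw [div_le_div_iff₀ (by positivity) hnR]
    nlinarith
  · -- n = 2m+1 odd
    have hm' : n = 2*m+1 := by omega
    have h1 : legendre n 0 = 0 := by
      rw [legendre_zero, coeffW_odd n n (by omega)]
      simp
    have hcc := congrArg (Nat.cast : ℕ → ℝ) (choose_odd_eq m)
    push_cast at hcc
    rw [← hm'] at hcc
    have h2 : (Pd n 0)^2 = ((n:ℝ)+1)^2 * (cb (m+1))^2 := by
      rw [Pd_zero]
      have he : n + 1 = 2*(m+1) := by omega
      rw [he, coeffW_even n (m+1) (by omega), div_pow, mul_pow ((n:ℝ)+1),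
        sq_neg_one_pow_mul, two_pow_sq]
      have hch : ((Nat.choose n (m+1):ℝ))^2 = ((Nat.centralBinom (m+1):ℝ))^2/4 := by
        rw [← hcc]; ring
      have e1 : ((4:ℝ)^(m+1))^2 = 4 * 4^n := by
        rw [← pow_mul, hm']
        have : (m+1)*2 = (2*m+1) + 1 := by omega
        rw [this, pow_succ]
        ring
      rw [hch]
      unfold cb
      rw [div_pow, e1]
      have h7 : (4:ℝ)^n ≠ 0 := by positivity
      field_simp
    rw [h1, h2]
    have hz : (0:ℝ)^2 = 0 := by norm_num
    rw [hz, zero_add]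
    have h3 := cb_sq (m+1)
    push_cast at h3
    have hcast : (2*((m:ℝ)+1)+1) = (n:ℝ)+2 := by rw [hm']; push_cast; ring
    rw [hcast] at h3
    have key : ((n:ℝ)+1)^2 * (cb (m+1))^2 ≤ ((n:ℝ)+1)^2 / ((n:ℝ)+2) := by
      calc ((n:ℝ)+1)^2 * (cb (m+1))^2 ≤ ((n:ℝ)+1)^2 * (1/((n:ℝ)+2)) :=
            mul_le_mul_of_nonneg_left h3 (sq_nonneg _)
        _ = ((n:ℝ)+1)^2 / ((n:ℝ)+2) := by ring
    calc ((n:ℝ)+1)^2 * (cb (m+1))^2 / (((n:ℝ)+1/2)^2 + 1/4)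
        ≤ (((n:ℝ)+1)^2 / ((n:ℝ)+2)) / (((n:ℝ)+1/2)^2 + 1/4) := by
          gcongr
      _ ≤ 3 / (n:ℝ) := by
          rw [div_div, div_le_div_iff₀ (by positivity) hnR]
          nlinarith

noncomputable def Pdd (n : ℕ) (t : ℝ) : ℝ :=
  (1 / (2 ^ n * n.factorial)) * (derivative (derivative (R n))).eval t

lemma hasDerivAt_legendre (n : ℕ) (x : ℝ) : HasDerivAt (legendre n) (Pd n x) x := by
  have h := (Polynomial.hasDerivAt (R n) x).const_mul (1 / (2 ^ n * (n.factorial:ℝ)))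
  have he : legendre n = fun t => (1 / (2 ^ n * (n.factorial:ℝ))) * (R n).eval t := by
    funext t; exact legendre_eq n t
  rw [he]
  exact h

lemma hasDerivAt_Pd (n : ℕ) (x : ℝ) : HasDerivAt (Pd n) (Pdd n x) x :=
  (Polynomial.hasDerivAt (derivative (R n)) x).const_mul (1 / (2 ^ n * (n.factorial:ℝ)))

lemma ode_real (n : ℕ) (x : ℝ) :
    (x^2 - 1) * Pdd n x + 2 * x * Pd n x = (n*(n+1) : ℝ) * legendre n x := by
  have h := congrArg (Polynomial.eval x) (ode n)
  simp only [eval_add, eval_mul, eval_sub, eval_pow, eval_X, eval_one, eval_ofNat,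
    eval_natCast] at h
  rw [legendre_eq]
  unfold Pdd Pd
  have hfac : ((n.factorial : ℝ)) ≠ 0 := Nat.cast_ne_zero.mpr n.factorial_ne_zero
  have h2 : ((2:ℝ)^n) ≠ 0 := by positivity
  push_cast at h ⊢
  field_simp
  linear_combination h

noncomputable def uu (n : ℕ) (φ : ℝ) : ℝ := sqrt (sin φ) * legendre n (cos φ)

noncomputable def uu1 (n : ℕ) (φ : ℝ) : ℝ :=
  cos φ / (2 * sqrt (sin φ)) * legendre n (cos φ) - sqrt (sin φ) * sin φ * Pd n (cos φ)

noncomputable def qq (n : ℕ) (φ : ℝ) : ℝ := ((n:ℝ)+1/2)^2 + 1/(4*(sin φ)^2)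

noncomputable def EE (n : ℕ) (φ : ℝ) : ℝ := uu n φ^2 + uu1 n φ^2 / qq n φ

lemma hasDerivAt_sqrtsin (φ : ℝ) (h : 0 < sin φ) :
    HasDerivAt (fun φ => sqrt (sin φ)) (cos φ / (2 * sqrt (sin φ))) φ := by
  have := (Real.hasDerivAt_sqrt (ne_of_gt h)).comp φ (Real.hasDerivAt_sin φ)
  refine HasDerivAt.congr_deriv this ?_
  ring

lemma hasDerivAt_ycos (n : ℕ) (φ : ℝ) :
    HasDerivAt (fun φ => legendre n (cos φ)) (-sin φ * Pd n (cos φ)) φ := by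
  have := (hasDerivAt_legendre n (cos φ)).comp φ (Real.hasDerivAt_cos φ)
  refine HasDerivAt.congr_deriv this ?_
  ring

lemma hasDerivAt_uu (n : ℕ) (φ : ℝ) (h : 0 < sin φ) :
    HasDerivAt (uu n) (uu1 n φ) φ := by
  have := (hasDerivAt_sqrtsin φ h).mul (hasDerivAt_ycos n φ)
  refine HasDerivAt.congr_deriv this ?_
  unfold uu1
  ring

lemma hasDerivAt_uu1 (n : ℕ) (φ : ℝ) (h : 0 < sin φ) :
    HasDerivAt (uu1 n) (-(qq n φ) * uu n φ) φ := by
  have hS : sqrt (sin φ) ≠ 0 := by positivity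
  have hS2 : (2:ℝ) * sqrt (sin φ) ≠ 0 := by positivity
  have hA : HasDerivAt (fun φ => cos φ / (2 * sqrt (sin φ)))
      ((-sin φ * (2 * sqrt (sin φ)) - cos φ * (2 * (cos φ / (2 * sqrt (sin φ)))))
        / (2 * sqrt (sin φ))^2) φ :=
    (Real.hasDerivAt_cos φ).div ((hasDerivAt_sqrtsin φ h).const_mul 2) hS2
  have hB : HasDerivAt (fun φ => sqrt (sin φ) * sin φ)
      (cos φ / (2 * sqrt (sin φ)) * sin φ + sqrt (sin φ) * cos φ) φ :=
    (hasDerivAt_sqrtsin φ h).mul (Real.hasDerivAt_sin φ)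
  have hPc : HasDerivAt (fun φ => Pd n (cos φ)) (Pdd n (cos φ) * (-sin φ)) φ :=
    (hasDerivAt_Pd n (cos φ)).comp φ (Real.hasDerivAt_cos φ)
  have hall := (hA.mul (hasDerivAt_ycos n φ)).sub (hB.mul hPc)
  have heq : uu1 n = fun φ => cos φ / (2 * sqrt (sin φ)) * legendre n (cos φ)
      - sqrt (sin φ) * sin φ * Pd n (cos φ) := rfl
  rw [heq]
  refine HasDerivAt.congr_deriv hall ?_
  -- algebra
  have hode := ode_real n (cos φ)
  have hsq : sqrt (sin φ)^2 = sin φ := Real.sq_sqrt h.le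
  have hpy : (cos φ)^2 = 1 - (sin φ)^2 := by
    have := sin_sq_add_cos_sq φ
    nlinarith
  set S := sqrt (sin φ) with hSdef
  rw [← hsq] at hpy
  set c := cos φ
  set Y := legendre n (cos φ)
  set p1 := Pd n (cos φ)
  set p2 := Pdd n (cos φ)
  have hK : (c^2 - 1) * p2 + 2 * c * p1 = (n*(n+1):ℝ) * Y := hode
  have hp2 : p2 = (2*c*p1 - (n*(n+1):ℝ)*Y)/(S^2*S^2) := by
    field_simp
    linear_combination (-1 : ℝ) * hK + p2 * hpy
  unfold qq uu
  rw [← hSdef]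
  rw [← hsq, hp2]
  field_simp
  linear_combination (-4 * Y) * hpy

lemma qq_pos (n : ℕ) (φ : ℝ) : 0 < qq n φ := by
  unfold qq
  have h1 : (0:ℝ) < ((n:ℝ)+1/2)^2 := by positivity
  have h2 : (0:ℝ) ≤ 1/(4*(sin φ)^2) := by positivity
  linarith

lemma hasDerivAt_qq (n : ℕ) (φ : ℝ) (h : 0 < sin φ) :
    HasDerivAt (qq n) (-(8 * sin φ * cos φ) / (4 * (sin φ)^2)^2) φ := by
  have hs : (4 * (sin φ)^2) ≠ 0 := by positivity
  have h1 : HasDerivAt (fun φ : ℝ => 4 * (sin φ)^2) (4 * (2 * sin φ * cos φ)) φ := by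
    have := ((Real.hasDerivAt_sin φ).pow 2).const_mul (4:ℝ)
    refine HasDerivAt.congr_deriv this ?_
    ring
  have h2 := ((hasDerivAt_const φ (1:ℝ)).div h1 hs)
  have h3 := h2.const_add (((n:ℝ)+1/2)^2)
  have he : qq n = fun φ => ((n:ℝ)+1/2)^2 + 1/(4*(sin φ)^2) := rfl
  rw [he]
  refine HasDerivAt.congr_deriv h3 ?_
  field_simp
  ring

lemma hasDerivAt_EE (n : ℕ) (φ : ℝ) (h : 0 < sin φ) :
    HasDerivAt (EE n)
      (-(uu1 n φ)^2 * (-(8 * sin φ * cos φ) / (4 * (sin φ)^2)^2) / (qq n φ)^2) φ := by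
  have h1 := (hasDerivAt_uu n φ h).pow 2
  have h2 := ((hasDerivAt_uu1 n φ h).pow 2).div (hasDerivAt_qq n φ h) (ne_of_gt (qq_pos n φ))
  have h3 := h1.add h2
  have he : EE n = fun φ => uu n φ^2 + uu1 n φ^2 / qq n φ := rfl
  rw [he]
  refine HasDerivAt.congr_deriv h3 ?_
  have hq := qq_pos n φ
  simp only [Pi.pow_apply]
  field_simp
  ring

lemma EE_mono (n : ℕ) (θ : ℝ) (h0 : 0 < θ) (h2 : θ ≤ π/2) : EE n θ ≤ EE n (π/2) := by
  have hpi : π/2 < π := by linarith [pi_pos]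
  have hsin : ∀ φ ∈ Set.Icc θ (π/2), 0 < sin φ := fun φ hφ =>
    sin_pos_of_pos_of_lt_pi (lt_of_lt_of_le h0 hφ.1) (lt_of_le_of_lt hφ.2 hpi)
  have hmono : MonotoneOn (EE n) (Set.Icc θ (π/2)) := by
    apply monotoneOn_of_deriv_nonneg (convex_Icc _ _)
    · exact fun x hx => ((hasDerivAt_EE n x (hsin x hx)).continuousAt).continuousWithinAt
    · rw [interior_Icc]
      exact fun x hx => (hasDerivAt_EE n x
        (hsin x ⟨le_of_lt hx.1, le_of_lt hx.2⟩)).differentiableAt.differentiableWithinAt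
    · rw [interior_Icc]
      intro x hx
      have hsx : 0 < sin x := hsin x ⟨le_of_lt hx.1, le_of_lt hx.2⟩
      have hcx : 0 ≤ cos x := Real.cos_nonneg_of_mem_Icc ⟨by linarith [hx.1], le_of_lt hx.2⟩
      rw [(hasDerivAt_EE n x hsx).deriv]
      have heq : -(uu1 n x)^2 * (-(8 * sin x * cos x) / (4 * (sin x)^2)^2) / (qq n x)^2
          = (uu1 n x)^2 * ((8 * sin x * cos x) / (4 * (sin x)^2)^2) / (qq n x)^2 := by
        ring
      rw [heq]
      have hq := qq_pos n x
      positivity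
  exact hmono ⟨le_refl θ, h2⟩ ⟨h2, le_refl _⟩ h2

lemma key (n : ℕ) (hn : 1 ≤ n) (θ : ℝ) (h0 : 0 < θ) (h2 : θ ≤ π/2) :
    sin θ * (legendre n (cos θ))^2 ≤ 3 / n := by
  have hpi : π/2 < π := by linarith [pi_pos]
  have hsθ : 0 < sin θ := sin_pos_of_pos_of_lt_pi h0 (lt_of_le_of_lt h2 hpi)
  have h1 : sin θ * (legendre n (cos θ))^2 = (uu n θ)^2 := by
    unfold uu
    rw [mul_pow, Real.sq_sqrt hsθ.le]
  have h2' : (uu n θ)^2 ≤ EE n θ := by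
    unfold EE
    have hq := qq_pos n θ
    have : 0 ≤ uu1 n θ^2 / qq n θ := by positivity
    linarith
  have hE : EE n (π/2) = (legendre n 0)^2 + (Pd n 0)^2/(((n:ℝ)+1/2)^2 + 1/4) := by
    unfold EE uu uu1 qq
    rw [Real.sin_pi_div_two, Real.cos_pi_div_two, Real.sqrt_one]
    norm_num
  have hmono := EE_mono n θ h0 h2
  have hvb := value_bound n hn
  linarith

end LegendreAux

theorem legendre_cos_tendsto_zero (ℓ : ℕ → ℕ) (hℓ : ∀ N, 1 ≤ ℓ N)
    (hN : Tendsto (fun N : ℕ => (N : ℝ) / (ℓ N : ℝ)) atTop (nhds 0)) :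
    Tendsto (fun N : ℕ => legendre (ℓ N) (Real.cos (π / (2 * N)))) atTop (nhds 0) ∧
      Tendsto (fun N : ℕ => 1 - legendre (ℓ N) (Real.cos (π / (2 * N)))) atTop (nhds 1) := by
  have hsq : ∀ N : ℕ, 1 ≤ N →
      |legendre (ℓ N) (Real.cos (π / (2 * N)))| ≤ Real.sqrt (3 * ((N:ℝ) / (ℓ N))) := by
    intro N hN1
    have hNR : (1:ℝ) ≤ N := by exact_mod_cast hN1
    have hNpos : (0:ℝ) < N := by linarith
    set θ := π / (2 * (N:ℝ)) with hθ
    have hθpos : 0 < θ := by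
      apply div_pos pi_pos
      linarith
    have hθle : θ ≤ π / 2 := by
      rw [hθ, div_le_div_iff₀ (by linarith) (by norm_num)]
      nlinarith [pi_pos]
    have hkey := LegendreAux.key (ℓ N) (hℓ N) θ hθpos hθle
    have hsin : 1/(N:ℝ) ≤ Real.sin θ := by
      have := Real.mul_le_sin (le_of_lt hθpos) hθle
      calc 1/(N:ℝ) = 2/π * θ := by
            rw [hθ]; field_simp
          _ ≤ Real.sin θ := this
    have hℓpos : (0:ℝ) < (ℓ N : ℝ) := by exact_mod_cast hℓ N
    have hsq2 : (legendre (ℓ N) (Real.cos θ))^2 ≤ 3 * ((N:ℝ) / (ℓ N)) := by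
      have hs0 : 0 ≤ (legendre (ℓ N) (Real.cos θ))^2 := sq_nonneg _
      have h1 : (1/(N:ℝ)) * (legendre (ℓ N) (Real.cos θ))^2 ≤ 3 / (ℓ N) := by
        calc (1/(N:ℝ)) * (legendre (ℓ N) (Real.cos θ))^2
            ≤ Real.sin θ * (legendre (ℓ N) (Real.cos θ))^2 :=
              mul_le_mul_of_nonneg_right hsin hs0
          _ ≤ 3 / (ℓ N) := hkey
      calc (legendre (ℓ N) (Real.cos θ))^2
          = ((1/(N:ℝ)) * (legendre (ℓ N) (Real.cos θ))^2) * N := by field_simp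
        _ ≤ (3 / (ℓ N : ℝ)) * N := mul_le_mul_of_nonneg_right h1 (le_of_lt hNpos)
        _ = 3 * ((N:ℝ) / (ℓ N)) := by ring
    calc |legendre (ℓ N) (Real.cos θ)| = Real.sqrt ((legendre (ℓ N) (Real.cos θ))^2) :=
          (Real.sqrt_sq_eq_abs _).symm
      _ ≤ Real.sqrt (3 * ((N:ℝ) / (ℓ N))) := Real.sqrt_le_sqrt hsq2
  have hg : Tendsto (fun N : ℕ => Real.sqrt (3 * ((N:ℝ) / (ℓ N)))) atTop (nhds 0) := by
    have h3 : Tendsto (fun N : ℕ => 3 * ((N:ℝ) / (ℓ N))) atTop (nhds 0) := by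
      simpa using hN.const_mul 3
    have := h3.sqrt
    simpa using this
  have habs : Tendsto (fun N : ℕ => |legendre (ℓ N) (Real.cos (π / (2 * N)))|) atTop (nhds 0) := by
    apply squeeze_zero' (Eventually.of_forall fun N => abs_nonneg _)
    · filter_upwards [eventually_ge_atTop 1] with N h using hsq N h
    · exact hg
  have h1 : Tendsto (fun N : ℕ => legendre (ℓ N) (Real.cos (π / (2 * N)))) atTop (nhds 0) := by
    exact (tendsto_zero_iff_abs_tendsto_zero _).mpr habs
  refine ⟨h1, ?_⟩
  have := (tendsto_const_nhds : Tendsto (fun _ : ℕ => (1:ℝ)) atTop (nhds 1)).sub h1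
  simpa using this
end

section
/- For each N ≥ 1 define φ_N : ℤ → ℝ by φ_N(k) = 1/√k for 1 ≤ k ≤ N and φ_N(k) = 0 otherwise. Then there is an absolute constant C such that the discrete convolution satisfies ∑_{k∈ℤ} (φ_N * φ_N)(k)² ≤ C N log² N for all N ≥ 2. -/
open Real

/-- The truncated function `φ_N(k) = 1/√k` for `1 ≤ k ≤ N`, zero otherwise. -/
noncomputable def phi (N : ℕ) (k : ℤ) : ℝ :=
  if 1 ≤ k ∧ k ≤ (N : ℤ) then 1 / Real.sqrt (k : ℝ) else 0

lemma phi_nonneg (N : ℕ) (k : ℤ) : 0 ≤ phi N k := by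
  unfold phi; split <;> positivity

lemma phi_eq_zero {N : ℕ} {k : ℤ} (h : ¬ (1 ≤ k ∧ k ≤ (N : ℤ))) : phi N k = 0 := if_neg h

/-- Harmonic-type bound over integer intervals. -/
lemma harm_sum : ∀ N : ℕ, ∑ m ∈ Finset.Icc (1 : ℤ) (N : ℤ), (1 : ℝ) / (m : ℝ) ≤ 1 + Real.log N := by
  intro N
  induction N with
  | zero => simp
  | succ n ih =>
    have hins : Finset.Icc (1 : ℤ) ((n + 1 : ℕ) : ℤ) = insert ((n : ℤ) + 1) (Finset.Icc (1 : ℤ) (n : ℤ)) := by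
      ext x; simp [Finset.mem_Icc, Finset.mem_insert]; omega
    have hnm : ((n : ℤ) + 1) ∉ Finset.Icc (1 : ℤ) (n : ℤ) := by
      simp [Finset.mem_Icc]
    rw [hins, Finset.sum_insert hnm]
    rcases Nat.eq_zero_or_pos n with hn0 | hn1
    · subst hn0; norm_num
    · have hnpos : (0 : ℝ) < n := by exact_mod_cast hn1
      have hlog : (1 : ℝ) / ((n : ℝ) + 1) ≤ Real.log ((n : ℕ) + 1) - Real.log n := by
        have hx : (0 : ℝ) < (n : ℝ) / ((n : ℝ) + 1) := by positivity
        have h1 := Real.log_le_sub_one_of_pos hx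
        have hdiv : Real.log ((n : ℝ) / ((n : ℝ) + 1)) = Real.log n - Real.log ((n : ℝ) + 1) :=
          Real.log_div (by positivity) (by positivity)
        have h2 : (n : ℝ) / ((n : ℝ) + 1) - 1 = -(1 / ((n : ℝ) + 1)) := by
          field_simp
          ring
        rw [hdiv, h2] at h1
        push_cast
        linarith
    -- combine
      have := ih
      push_cast at hlog ⊢
      push_cast at this
      linarith
  
/-- The inner convolution sum is bounded by `1 + log N`. -/
lemma conv_le (N : ℕ) (k : ℤ) :
    (∑' m : ℤ, phi N m * phi N (k - m)) ≤ 1 + Real.log N := by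
  classical
  have hsupp : ∀ m : ℤ, m ∉ Finset.Icc (1 : ℤ) (N : ℤ) → phi N m * phi N (k - m) = 0 := by
    intro m hm
    rw [phi_eq_zero (by simpa [Finset.mem_Icc] using hm), zero_mul]
  rw [tsum_eq_sum hsupp]
  set t : ℤ → ℝ := fun j => if 1 ≤ j ∧ j ≤ (N : ℤ) then 1 / (2 * (j : ℝ)) else 0 with ht
  have htnonneg : ∀ j, 0 ≤ t j := by
    intro j; rw [ht]; dsimp only; split
    · rename_i h
      have : (0:ℝ) < (j:ℝ) := by exact_mod_cast lt_of_lt_of_le zero_lt_one h.1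
      positivity
    · exact le_refl 0
  have hterm : ∀ m ∈ Finset.Icc (1 : ℤ) (N : ℤ),
      phi N m * phi N (k - m) ≤ t m + t (k - m) := by
    intro m _
    by_cases h1 : 1 ≤ m ∧ m ≤ (N : ℤ)
    · by_cases h2 : 1 ≤ k - m ∧ k - m ≤ (N : ℤ)
      · have hmpos : (0 : ℝ) < (m : ℝ) := by exact_mod_cast lt_of_lt_of_le zero_lt_one h1.1
        have hkpos : (0 : ℝ) < ((k - m : ℤ) : ℝ) := by
          exact_mod_cast lt_of_lt_of_le zero_lt_one h2.1
        rw [phi, phi, if_pos h1, if_pos h2, ht]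
        simp only [if_pos h1, if_pos h2]
        have ha : (1 / Real.sqrt (m : ℝ)) ^ 2 = 1 / (m : ℝ) := by
          rw [div_pow, one_pow, Real.sq_sqrt hmpos.le]
        have hb : (1 / Real.sqrt ((k - m : ℤ) : ℝ)) ^ 2 = 1 / ((k - m : ℤ) : ℝ) := by
          rw [div_pow, one_pow, Real.sq_sqrt hkpos.le]
        have hamgm := two_mul_le_add_sq (1 / Real.sqrt (m : ℝ)) (1 / Real.sqrt ((k - m : ℤ) : ℝ))
        rw [ha, hb] at hamgm
        have h2m : 1 / (2 * (m : ℝ)) = (1 / (m : ℝ)) / 2 := by ring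
        have h2k : 1 / (2 * ((k - m : ℤ) : ℝ)) = (1 / ((k - m : ℤ) : ℝ)) / 2 := by ring
        rw [h2m, h2k]
        linarith
      · rw [phi_eq_zero h2, mul_zero]
        exact add_nonneg (htnonneg _) (htnonneg _)
    · rw [phi_eq_zero h1, zero_mul]
      exact add_nonneg (htnonneg _) (htnonneg _)
  have hhalf : ∑ m ∈ Finset.Icc (1 : ℤ) (N : ℤ), t m ≤ (1 + Real.log N) / 2 := by
    have : ∑ m ∈ Finset.Icc (1 : ℤ) (N : ℤ), t m
        = ∑ m ∈ Finset.Icc (1 : ℤ) (N : ℤ), (1 / (m : ℝ)) / 2 := by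
      refine Finset.sum_congr rfl fun m hm => ?_
      rw [ht]; simp only
      rw [if_pos (by simpa [Finset.mem_Icc] using hm)]
      ring
    rw [this, ← Finset.sum_div]
    have := harm_sum N
    linarith
  have himg : ∑ m ∈ Finset.Icc (1 : ℤ) (N : ℤ), t (k - m) ≤ (1 + Real.log N) / 2 := by
    have hinj : Set.InjOn (fun m : ℤ => k - m) (Finset.Icc (1 : ℤ) (N : ℤ)) := by
      intro a _ b _ hab; dsimp only at hab; omega
    rw [← Finset.sum_image hinj]
    set S := (Finset.Icc (1 : ℤ) (N : ℤ)).image (fun m : ℤ => k - m) with hS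
    have hstep : ∑ j ∈ S, t j ≤ ∑ j ∈ S ∪ Finset.Icc (1 : ℤ) (N : ℤ), t j :=
      Finset.sum_le_sum_of_subset_of_nonneg Finset.subset_union_left
        (fun j _ _ => htnonneg j)
    have heq : ∑ j ∈ S ∪ Finset.Icc (1 : ℤ) (N : ℤ), t j
        = ∑ j ∈ Finset.Icc (1 : ℤ) (N : ℤ), t j := by
      refine (Finset.sum_subset Finset.subset_union_right ?_).symm
      intro j _ hj
      rw [ht]; simp only
      rw [if_neg (by simpa [Finset.mem_Icc] using hj)]
    calc ∑ j ∈ S, t j ≤ ∑ j ∈ S ∪ Finset.Icc (1 : ℤ) (N : ℤ), t j := hstep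
      _ = ∑ j ∈ Finset.Icc (1 : ℤ) (N : ℤ), t j := heq
      _ ≤ (1 + Real.log N) / 2 := hhalf
  calc ∑ m ∈ Finset.Icc (1 : ℤ) (N : ℤ), phi N m * phi N (k - m)
      ≤ ∑ m ∈ Finset.Icc (1 : ℤ) (N : ℤ), (t m + t (k - m)) := Finset.sum_le_sum hterm
    _ = (∑ m ∈ Finset.Icc (1 : ℤ) (N : ℤ), t m)
        + ∑ m ∈ Finset.Icc (1 : ℤ) (N : ℤ), t (k - m) := Finset.sum_add_distrib
    _ ≤ (1 + Real.log N) / 2 + (1 + Real.log N) / 2 := add_le_add hhalf himg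
    _ = 1 + Real.log N := by ring

theorem convolution_sq_sum_bound :
    ∃ C : ℝ, ∀ N : ℕ, 2 ≤ N →
      (∑' k : ℤ, (∑' m : ℤ, phi N m * phi N (k - m)) ^ 2) ≤
        C * N * (Real.log N) ^ 2 := by
  classical
  refine ⟨2 * (1 / Real.log 2 + 1) ^ 2, ?_⟩
  intro N hN
  have hlog2 : (0 : ℝ) < Real.log 2 := Real.log_pos (by norm_num)
  have hlogN : Real.log 2 ≤ Real.log N := by
    apply Real.log_le_log (by norm_num)
    exact_mod_cast hN
  have hlogNpos : (0 : ℝ) < Real.log N := lt_of_lt_of_le hlog2 hlogN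
  -- outer support
  have houter : ∀ k : ℤ, k ∉ Finset.Icc (2 : ℤ) (2 * (N : ℤ)) →
      (∑' m : ℤ, phi N m * phi N (k - m)) ^ 2 = 0 := by
    intro k hk
    have hz : ∀ m : ℤ, phi N m * phi N (k - m) = 0 := by
      intro m
      by_cases h1 : 1 ≤ m ∧ m ≤ (N : ℤ)
      · have h2 : ¬ (1 ≤ k - m ∧ k - m ≤ (N : ℤ)) := by
          simp only [Finset.mem_Icc] at hk; omega
        rw [phi_eq_zero h2, mul_zero]
      · rw [phi_eq_zero h1, zero_mul]
    rw [(tsum_congr hz).trans tsum_zero]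
    norm_num
  rw [tsum_eq_sum houter]
  have hB : (0 : ℝ) ≤ 1 + Real.log N := by linarith
  have hsq : ∀ k ∈ Finset.Icc (2 : ℤ) (2 * (N : ℤ)),
      (∑' m : ℤ, phi N m * phi N (k - m)) ^ 2 ≤ (1 + Real.log N) ^ 2 := by
    intro k _
    have hnn : 0 ≤ ∑' m : ℤ, phi N m * phi N (k - m) :=
      tsum_nonneg fun m => mul_nonneg (phi_nonneg _ _) (phi_nonneg _ _)
    exact pow_le_pow_left₀ hnn (conv_le N k) 2
  have hcard : ((Finset.Icc (2 : ℤ) (2 * (N : ℤ))).card : ℝ) ≤ 2 * (N : ℝ) := by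
    rw [Int.card_Icc]
    have : (2 * (N : ℤ) + 1 - 2).toNat ≤ 2 * N := by omega
    calc ((2 * (N : ℤ) + 1 - 2).toNat : ℝ) ≤ ((2 * N : ℕ) : ℝ) := by exact_mod_cast this
      _ = 2 * (N : ℝ) := by push_cast; ring
  have hsum : ∑ k ∈ Finset.Icc (2 : ℤ) (2 * (N : ℤ)),
      (∑' m : ℤ, phi N m * phi N (k - m)) ^ 2
      ≤ ((Finset.Icc (2 : ℤ) (2 * (N : ℤ))).card : ℝ) * (1 + Real.log N) ^ 2 := by
    have := Finset.sum_le_card_nsmul _ _ _ hsq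
    simpa [nsmul_eq_mul] using this
  have hBle : 1 + Real.log N ≤ (1 / Real.log 2 + 1) * Real.log N := by
    have h1 : (1 : ℝ) ≤ Real.log N / Real.log 2 := (one_le_div hlog2).mpr hlogN
    have : (1 / Real.log 2 + 1) * Real.log N = Real.log N / Real.log 2 + Real.log N := by
      field_simp
    rw [this]
    linarith
  have hc : (0 : ℝ) ≤ 1 / Real.log 2 + 1 := by positivity
  calc ∑ k ∈ Finset.Icc (2 : ℤ) (2 * (N : ℤ)),
        (∑' m : ℤ, phi N m * phi N (k - m)) ^ 2
      ≤ ((Finset.Icc (2 : ℤ) (2 * (N : ℤ))).card : ℝ) * (1 + Real.log N) ^ 2 := hsum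
    _ ≤ (2 * (N : ℝ)) * ((1 / Real.log 2 + 1) * Real.log N) ^ 2 := by
        apply mul_le_mul hcard (pow_le_pow_left₀ hB hBle 2) (by positivity) (by positivity)
    _ = 2 * (1 / Real.log 2 + 1) ^ 2 * (N : ℝ) * (Real.log N) ^ 2 := by ring
end

section
/- There is an absolute constant C such that for all N ≥ 2, ∑_{i,j,k,l=1, all four indices pairwise distinct}^N 1/√(|i−j|·|k−l|·|i−k|·|j−l|) ≤ C N² log² N. -/
open Real Finset

noncomputable def ee (x y : ℕ) : ℝ := if x ≠ y then 1 / |(x : ℝ) - y| else 0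

lemma ee_nonneg (x y : ℕ) : 0 ≤ ee x y := by
  unfold ee; split
  · positivity
  · exact le_refl 0

lemma ee_symm (x y : ℕ) : ee x y = ee y x := by
  unfold ee
  rcases eq_or_ne x y with rfl | h
  · simp
  · rw [if_pos h, if_pos (Ne.symm h), abs_sub_comm]

noncomputable def ff (d : ℕ) : ℝ := if d = 0 then 0 else 1 / d

lemma ff_nonneg (d : ℕ) : 0 ≤ ff d := by
  unfold ff
  split
  · exact le_refl 0
  · positivity

lemma ff_sum_le (N : ℕ) : ∑ d ∈ range (N + 1), ff d ≤ 1 + Real.log N := by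
  have h : ∑ d ∈ range (N + 1), ff d = ((harmonic N : ℚ) : ℝ) := by
    rw [Finset.sum_range_succ']
    unfold harmonic
    push_cast
    simp [ff, Nat.succ_ne_zero, one_div]
  rw [h]
  exact harmonic_le_one_add_log N

lemma g_le {N j : ℕ} (hj : j ∈ Icc 1 N) :
    ∑ i ∈ Icc 1 N, ee i j ≤ 2 * (1 + Real.log N) := by
  obtain ⟨hj1, hjN⟩ := Finset.mem_Icc.mp hj
  have hsplit : Icc 1 N = Icc 1 j ∪ Ioc j N := by
    ext a
    simp only [mem_Icc, mem_Ioc, mem_union]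
    omega
  have hdisj : Disjoint (Icc 1 j) (Ioc j N) := by
    rw [Finset.disjoint_left]
    intro a ha hb
    simp only [mem_Icc, mem_Ioc] at ha hb
    omega
  have h1 : ∑ i ∈ Icc 1 j, ee i j = ∑ d ∈ range j, ff d := by
    apply Finset.sum_nbij' (fun i => j - i) (fun d => j - d)
    · intro a ha; simp only [mem_Icc, mem_range] at *; omega
    · intro a ha; simp only [mem_Icc, mem_range] at *; omega
    · intro a ha; simp only [mem_Icc] at ha; omega
    · intro a ha; simp only [mem_range] at ha; omega
    · intro a ha
      simp only [mem_Icc] at ha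
      unfold ee ff
      rcases eq_or_ne a j with rfl | h
      · simp
      · have haj : a < j := lt_of_le_of_ne ha.2 h
        rw [if_pos h, if_neg (by omega)]
        congr 1
        rw [Nat.cast_sub ha.2, abs_sub_comm, abs_of_pos (by
          have : (a : ℝ) < j := by exact_mod_cast haj
          linarith)]
  have h2 : ∑ i ∈ Ioc j N, ee i j = ∑ d ∈ Icc 1 (N - j), ff d := by
    apply Finset.sum_nbij' (fun i => i - j) (fun d => d + j)
    · intro a ha; simp only [mem_Ioc, mem_Icc] at *; omega
    · intro a ha; simp only [mem_Ioc, mem_Icc] at *; omega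
    · intro a ha; simp only [mem_Ioc] at ha; omega
    · intro a ha; simp only [mem_Icc] at ha; omega
    · intro a ha
      simp only [mem_Ioc] at ha
      unfold ee ff
      rw [if_pos (by omega), if_neg (by omega)]
      congr 1
      rw [Nat.cast_sub (le_of_lt ha.1), abs_of_pos (by
        have : (j : ℝ) < a := by exact_mod_cast ha.1
        linarith)]
  have hb1 : ∑ d ∈ range j, ff d ≤ ∑ d ∈ range (N + 1), ff d := by
    apply Finset.sum_le_sum_of_subset_of_nonneg
    · exact Finset.range_subset_range.mpr (by omega)
    · intro d _ _; exact ff_nonneg d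
  have hb2 : ∑ d ∈ Icc 1 (N - j), ff d ≤ ∑ d ∈ range (N + 1), ff d := by
    apply Finset.sum_le_sum_of_subset_of_nonneg
    · intro d hd; simp only [mem_Icc, mem_range] at *; omega
    · intro d _ _; exact ff_nonneg d
  rw [hsplit, Finset.sum_union hdisj, h1, h2]
  have := ff_sum_le N
  linarith

lemma amgm {a b : ℝ} (ha : 0 < a) (hb : 0 < b) :
    1 / Real.sqrt (a * b) ≤ (1 / a + 1 / b) / 2 := by
  have hsa : 0 < Real.sqrt a := Real.sqrt_pos.mpr ha
  have hsb : 0 < Real.sqrt b := Real.sqrt_pos.mpr hb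
  have ha2 : Real.sqrt a ^ 2 = a := Real.sq_sqrt ha.le
  have hb2 : Real.sqrt b ^ 2 = b := Real.sq_sqrt hb.le
  rw [Real.sqrt_mul ha.le]
  rw [div_add_div _ _ ha.ne' hb.ne', div_div, div_le_div_iff₀ (by positivity) (by positivity)]
  nlinarith [sq_nonneg (Real.sqrt a - Real.sqrt b), mul_pos hsa hsb,
    sq_nonneg (Real.sqrt a * Real.sqrt b)]

lemma pointwise (i j k l : ℕ) :
    (if i ≠ j ∧ i ≠ k ∧ i ≠ l ∧ j ≠ k ∧ j ≠ l ∧ k ≠ l then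
        1 / Real.sqrt (|(i : ℝ) - j| * |(k : ℝ) - l| * |(i : ℝ) - k| * |(j : ℝ) - l|)
      else 0) ≤ (ee i j * ee j l + ee i k * ee k l) / 2 := by
  have hnn : 0 ≤ (ee i j * ee j l + ee i k * ee k l) / 2 := by
    have := ee_nonneg i j; have := ee_nonneg j l
    have := ee_nonneg i k; have := ee_nonneg k l
    have h1 : 0 ≤ ee i j * ee j l := by positivity
    have h2 : 0 ≤ ee i k * ee k l := by positivity
    linarith
  split
  case isTrue h =>
    obtain ⟨hij, hik, hil, hjk, hjl, hkl⟩ := h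
    have cast_ne : ∀ x y : ℕ, x ≠ y → (0 : ℝ) < |(x : ℝ) - y| := by
      intro x y hxy
      rw [abs_pos, sub_ne_zero]
      exact_mod_cast hxy
    have pij := cast_ne i j hij
    have pjl := cast_ne j l hjl
    have pik := cast_ne i k hik
    have pkl := cast_ne k l hkl
    have hre : |(i : ℝ) - j| * |(k : ℝ) - l| * |(i : ℝ) - k| * |(j : ℝ) - l|
        = (|(i : ℝ) - j| * |(j : ℝ) - l|) * (|(i : ℝ) - k| * |(k : ℝ) - l|) := by ring
    rw [hre]
    have key := amgm (mul_pos pij pjl) (mul_pos pik pkl)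
    have e1 : ee i j * ee j l = 1 / (|(i : ℝ) - j| * |(j : ℝ) - l|) := by
      unfold ee; rw [if_pos hij, if_pos hjl, div_mul_div_comm, one_mul]
    have e2 : ee i k * ee k l = 1 / (|(i : ℝ) - k| * |(k : ℝ) - l|) := by
      unfold ee; rw [if_pos hik, if_pos hkl, div_mul_div_comm, one_mul]
    rw [e1, e2]
    exact key
  case isFalse h => exact hnn

theorem quadruple_sum_bound :
    ∃ C : ℝ, ∀ N : ℕ, 2 ≤ N →
      (∑ i ∈ Finset.Icc 1 N, ∑ j ∈ Finset.Icc 1 N,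
        ∑ k ∈ Finset.Icc 1 N, ∑ l ∈ Finset.Icc 1 N,
          if i ≠ j ∧ i ≠ k ∧ i ≠ l ∧ j ≠ k ∧ j ≠ l ∧ k ≠ l then
            1 / Real.sqrt (|(i : ℝ) - j| * |(k : ℝ) - l| * |(i : ℝ) - k| * |(j : ℝ) - l|)
          else 0) ≤ C * N ^ 2 * (Real.log N) ^ 2 := by
  refine ⟨25, fun N hN => ?_⟩
  set I := Finset.Icc 1 N with hI
  set H : ℝ := 2 * (1 + Real.log N) with hHdef
  have hlogN : Real.log 2 ≤ Real.log N :=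
    Real.log_le_log (by norm_num) (by exact_mod_cast hN)
  have hlog2 : (0.6931471803 : ℝ) < Real.log 2 := Real.log_two_gt_d9
  have hHpos : 0 ≤ H := by rw [hHdef]; nlinarith
  have hcard : (I.card : ℝ) = N := by rw [hI, Nat.card_Icc, Nat.add_sub_cancel]
  have hGcol : ∀ j ∈ I, ∑ i ∈ I, ee i j ≤ H := fun j hj => g_le hj
  have hGrow : ∀ j ∈ I, ∑ l ∈ I, ee j l ≤ H := by
    intro j hj
    rw [Finset.sum_congr rfl (fun l _ => ee_symm j l)]
    exact g_le hj
  have hGrow_nn : ∀ j : ℕ, 0 ≤ ∑ l ∈ I, ee j l :=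
    fun j => Finset.sum_nonneg fun l _ => ee_nonneg j l
  have hGcol_nn : ∀ j : ℕ, 0 ≤ ∑ i ∈ I, ee i j :=
    fun j => Finset.sum_nonneg fun i _ => ee_nonneg i j
  have hSA : ∑ i ∈ I, ∑ j ∈ I, ∑ k ∈ I, ∑ l ∈ I, ee i j * ee j l
      ≤ (N : ℝ) ^ 2 * H ^ 2 := by
    have step1 : ∑ i ∈ I, ∑ j ∈ I, ∑ k ∈ I, ∑ l ∈ I, ee i j * ee j l
        = (N : ℝ) * ∑ j ∈ I, (∑ i ∈ I, ee i j) * (∑ l ∈ I, ee j l) := by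
      rw [Finset.sum_comm, Finset.mul_sum]
      refine Finset.sum_congr rfl fun j _ => ?_
      have hin : ∀ i : ℕ, ∑ k ∈ I, ∑ l ∈ I, ee i j * ee j l
          = (N : ℝ) * (ee i j * ∑ l ∈ I, ee j l) := by
        intro i
        rw [Finset.sum_const, nsmul_eq_mul, hcard, ← Finset.mul_sum]
      rw [Finset.sum_congr rfl fun i _ => hin i, ← Finset.mul_sum, ← Finset.sum_mul]
    rw [step1]
    have : ∑ j ∈ I, (∑ i ∈ I, ee i j) * (∑ l ∈ I, ee j l) ≤ ∑ j ∈ I, H * H := by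
      refine Finset.sum_le_sum fun j hj => ?_
      exact mul_le_mul (hGcol j hj) (hGrow j hj) (hGrow_nn j) hHpos
    calc (N : ℝ) * ∑ j ∈ I, (∑ i ∈ I, ee i j) * (∑ l ∈ I, ee j l)
        ≤ (N : ℝ) * ∑ j ∈ I, H * H := by
          apply mul_le_mul_of_nonneg_left this (by positivity)
      _ = (N : ℝ) ^ 2 * H ^ 2 := by
          rw [Finset.sum_const, nsmul_eq_mul, hcard]; ring
  have hSB : ∑ i ∈ I, ∑ j ∈ I, ∑ k ∈ I, ∑ l ∈ I, ee i k * ee k l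
      ≤ (N : ℝ) ^ 2 * H ^ 2 := by
    have step1 : ∑ i ∈ I, ∑ j ∈ I, ∑ k ∈ I, ∑ l ∈ I, ee i k * ee k l
        = (N : ℝ) * ∑ k ∈ I, (∑ i ∈ I, ee i k) * (∑ l ∈ I, ee k l) := by
      have inner : ∀ i : ℕ, ∑ j ∈ I, ∑ k ∈ I, ∑ l ∈ I, ee i k * ee k l
          = (N : ℝ) * ∑ k ∈ I, ee i k * (∑ l ∈ I, ee k l) := by
        intro i
        rw [Finset.sum_const, nsmul_eq_mul, hcard]
        congr 1
        refine Finset.sum_congr rfl fun k _ => ?_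
        rw [← Finset.mul_sum]
      rw [Finset.sum_congr rfl fun i _ => inner i, ← Finset.mul_sum]
      congr 1
      rw [Finset.sum_comm]
      refine Finset.sum_congr rfl fun k _ => ?_
      rw [Finset.sum_mul]
    rw [step1]
    have : ∑ k ∈ I, (∑ i ∈ I, ee i k) * (∑ l ∈ I, ee k l) ≤ ∑ k ∈ I, H * H := by
      refine Finset.sum_le_sum fun k hk => ?_
      exact mul_le_mul (hGcol k hk) (hGrow k hk) (hGrow_nn k) hHpos
    calc (N : ℝ) * ∑ k ∈ I, (∑ i ∈ I, ee i k) * (∑ l ∈ I, ee k l)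
        ≤ (N : ℝ) * ∑ k ∈ I, H * H := by
          apply mul_le_mul_of_nonneg_left this (by positivity)
      _ = (N : ℝ) ^ 2 * H ^ 2 := by
          rw [Finset.sum_const, nsmul_eq_mul, hcard]; ring
  calc (∑ i ∈ I, ∑ j ∈ I, ∑ k ∈ I, ∑ l ∈ I,
          if i ≠ j ∧ i ≠ k ∧ i ≠ l ∧ j ≠ k ∧ j ≠ l ∧ k ≠ l then
            1 / Real.sqrt (|(i : ℝ) - j| * |(k : ℝ) - l| * |(i : ℝ) - k| * |(j : ℝ) - l|)
          else 0)
      ≤ ∑ i ∈ I, ∑ j ∈ I, ∑ k ∈ I, ∑ l ∈ I,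
          (ee i j * ee j l + ee i k * ee k l) / 2 := by
        refine Finset.sum_le_sum fun i _ => Finset.sum_le_sum fun j _ =>
          Finset.sum_le_sum fun k _ => Finset.sum_le_sum fun l _ => pointwise i j k l
    _ = ((∑ i ∈ I, ∑ j ∈ I, ∑ k ∈ I, ∑ l ∈ I, ee i j * ee j l)
        + (∑ i ∈ I, ∑ j ∈ I, ∑ k ∈ I, ∑ l ∈ I, ee i k * ee k l)) / 2 := by
        simp only [← Finset.sum_div, ← Finset.sum_add_distrib]
    _ ≤ ((N : ℝ) ^ 2 * H ^ 2 + (N : ℝ) ^ 2 * H ^ 2) / 2 := by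
        linarith [hSA, hSB]
    _ = (N : ℝ) ^ 2 * H ^ 2 := by ring
    _ ≤ 25 * (N : ℝ) ^ 2 * Real.log N ^ 2 := by
        have hN2 : (0 : ℝ) ≤ (N : ℝ) ^ 2 := by positivity
        have hH5 : H ≤ 5 * Real.log N := by rw [hHdef]; nlinarith
        have : H ^ 2 ≤ 25 * Real.log N ^ 2 := by nlinarith
        nlinarith
end
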